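/- For every (r, r′) ∈ ℂ², the family t¹(r, r′) is an admissible solution for (r, r′), and t¹(r, r′)(0, 0) = 1/Γ(r+ρ). -/

import Mathlib

noncomputable section

/-- ρ = (n-1)/2 as a complex number. -/
def rho (n : ℕ) : ℂ := ((n : ℂ) - 1) / 2

/-- ρ' = (n-2)/2 as a complex number. -/
def rho' (n : ℕ) : ℂ := ((n : ℂ) - 2) / 2

/-- A diagonal sequence for `(r, r')`. -/
def IsDiagSeq (n : ℕ) (r r' : ℂ) (s : ℕ → ℂ) : Prop :=
  ∀ α : ℕ, (2*r' + 2*(α : ℂ) + (n : ℂ) - 2) * s α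
    = (2*r + 2*(α : ℂ) + (n : ℂ) - 1) * s (α + 1)

/-- L_even. -/
def Leven (n : ℕ) : Set (ℂ × ℂ) :=
  {p | ∃ i j : ℕ, p.1 = -rho n - (i : ℂ) ∧ p.2 = -rho' n - (j : ℂ) ∧ ∃ k : ℕ, i = j + 2*k}

/-- L_odd. -/
def Lodd (n : ℕ) : Set (ℂ × ℂ) :=
  {p | ∃ i j : ℕ, p.1 = -rho n - (i : ℂ) ∧ p.2 = -rho' n - (j : ℂ) ∧ ∃ k : ℕ, i = j + 2*k + 1}

/-- An admissible solution `t : ℕ × ℕ → ℂ` for `(r, r')`: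
`t(α,α') = 0` when `α' > α` or `α − α'` is odd (equivalently `α + α'` is odd),
and the relations (R1), (R2) hold for all `α ≥ α'` with `α − α'` even.
The natural-subtraction index `α - 1` is harmless, since in (R1) its coefficient
`(α − α')` vanishes when `α = α'`, and in (R2) we have `α ≥ α' ≥ 1`. -/
def IsAdmissible (n : ℕ) (r r' : ℂ) (t : ℕ → ℕ → ℂ) : Prop :=
  (∀ α α' : ℕ, (α < α' ∨ Odd (α + α')) → t α α' = 0) ∧
  (∀ α α' : ℕ, α' ≤ α → Even (α + α') →
    ((2*(α : ℂ) + (n : ℂ) - 2) * (2*r' + 2*(α' : ℂ) + (n : ℂ) - 2) * t α α'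
      = ((α : ℂ) + (α' : ℂ) + (n : ℂ) - 2) * (2*r + 2*(α : ℂ) + (n : ℂ) - 1)
          * t (α + 1) (α' + 1)
        + ((α : ℂ) - (α' : ℂ)) * (2*r - 2*(α : ℂ) - (n : ℂ) + 3)
          * t (α - 1) (α' + 1)) ∧
    (1 ≤ α' →
      (2*(α : ℂ) + (n : ℂ) - 2) * (2*r' - 2*(α' : ℂ) - (n : ℂ) + 4) * t α α'
      = ((α : ℂ) - (α' : ℂ) + 1) * (2*r + 2*(α : ℂ) + (n : ℂ) - 1)
          * t (α + 1) (α' - 1)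
        + ((α : ℂ) + (α' : ℂ) + (n : ℂ) - 3) * (2*r - 2*(α : ℂ) - (n : ℂ) + 3)
          * t (α - 1) (α' - 1)))

/-- The spectral function `t¹(r,r')` of Corollary 4.12 (1):
`t¹(r,r')(α,α') = (r'+ρ')_{α'} · Σ_{k=0}^{(α−α')/2} 2^{4k} ((α+α'+n−2)/2)_k (−(α−α')/2)_k
((2r+2r'+1)/4)_k ((2r−2r'+1)/4)_k / (2k)! · (1/Γ(r+ρ+α'+2k))`
for `α' ≤ α` with `α − α'` even, and `0` otherwise. -/
def t1 (n : ℕ) (r r' : ℂ) (α α' : ℕ) : ℂ :=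
  if α < α' ∨ Odd (α + α') then 0
  else (ascPochhammer ℂ α').eval (r' + rho' n) *
    ∑ k ∈ Finset.range ((α - α') / 2 + 1),
      (2 : ℂ)^(4*k) * (ascPochhammer ℂ k).eval (((α : ℂ) + (α' : ℂ) + (n : ℂ) - 2)/2) *
        (ascPochhammer ℂ k).eval (-(((α : ℂ) - (α' : ℂ))/2)) *
        (ascPochhammer ℂ k).eval ((2*r + 2*r' + 1)/4) *
        (ascPochhammer ℂ k).eval ((2*r - 2*r' + 1)/4) / ((2*k).factorial : ℂ) *
        (Complex.Gamma (r + rho n + (α' : ℂ) + 2*(k : ℂ)))⁻¹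


/-! Put `p = (2r + 2r' + 1)/4` and `q = (2r - 2r' + 1)/4`. For `α = α' + 2K` the value
`t¹(α, α')` is `(r' + ρ')_{α'}` times the series `Σ_k 16^k (a)_k (b)_k (p)_k (q)_k / ((2k)! Γ(z + 2k))`
with `a = α' + K + ρ'`, `b = -K`, `z = r + ρ + α'`; it terminates because `(-K)_k = 0` for `k > K`,
and it is balanced: `z = a + b + p + q`.
Both relations are contiguous relations of this series, coming from `1/Γ(w) = w/Γ(w + 1)` and
`x (x + 1)_k = (x)_k (x + k)`. (R1) already holds summand by summand. (R2) only holds after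
summation, where the balancing condition is needed: its summands telescope, leaving a boundary
term that contains `(b)_{K+1} = 0`. -/

open Finset Complex

lemma ascPochhammer_succ_eval_left {S : Type*} [CommSemiring S] (k : ℕ) (x : S) :
    (ascPochhammer S (k + 1)).eval x = x * (ascPochhammer S k).eval (x + 1) := by
  simp [ascPochhammer_succ_left, Polynomial.eval_comp]

lemma inv_Gamma_sub_one (z : ℂ) : (Gamma (z - 1))⁻¹ = (z - 1) * (Gamma z)⁻¹ := by
  simpa using one_div_Gamma_eq_self_mul_one_div_Gamma_add_one (z - 1)

def hyp43Coeff (p q a b : ℂ) (k : ℕ) : ℂ :=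
  (2 : ℂ) ^ (4 * k) * (ascPochhammer ℂ k).eval a * (ascPochhammer ℂ k).eval b *
    (ascPochhammer ℂ k).eval p * (ascPochhammer ℂ k).eval q / ((2 * k).factorial : ℂ)

/-- The truncation to `N` terms of the regularised Saalschützian series
`₄F₃(a, b, p, q; 1/2, z/2, (z+1)/2; 1) / Γ(z)`, written with `Γ(z + 2k) = Γ(z) (z)_{2k}` and
`(2k)! = 4^k k! (1/2)_k`. -/
def hyp43 (p q a b z : ℂ) (N : ℕ) : ℂ :=
  ∑ k ∈ range N, hyp43Coeff p q a b k * (Gamma (z + 2 * k))⁻¹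

section hyp43

variable (p q : ℂ)

lemma hyp43Coeff_zero (a b : ℂ) : hyp43Coeff p q a b 0 = 1 := by
  simp [hyp43Coeff]

lemma hyp43Coeff_neg_natCast {K k : ℕ} (h : K < k) (a : ℂ) : hyp43Coeff p q a (-K) k = 0 := by
  simp [hyp43Coeff, ascPochhammer_eval_neg_coe_nat_of_lt h]

lemma hyp43_succ (a b z : ℂ) (N : ℕ) :
    hyp43 p q a b z (N + 1) = hyp43 p q a b z N + hyp43Coeff p q a b N * (Gamma (z + 2 * N))⁻¹ :=
  sum_range_succ _ _

lemma hyp43_neg_natCast_of_lt {K N : ℕ} (hN : K < N) (a z : ℂ) :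
    hyp43 p q a (-K) z N = hyp43 p q a (-K) z (K + 1) := by
  refine (sum_subset (range_subset_range.mpr hN) fun k _ hkK => ?_).symm
  rw [hyp43Coeff_neg_natCast p q (by simpa using hkK), zero_mul]

theorem hyp43_contiguous_one (a b z : ℂ) (N : ℕ) :
    (a - b) * hyp43 p q a b z N
      = a * (z - 2 * b) * hyp43 p q (a + 1) b (z + 1) N
        - b * (z - 2 * a) * hyp43 p q a (b + 1) (z + 1) N := by
  simp only [hyp43, mul_sum, ← sum_sub_distrib]
  refine sum_congr rfl fun k _ => ?_
  have hA := ascPochhammer_succ_eval k a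
  have hB := ascPochhammer_succ_eval k b
  rw [ascPochhammer_succ_eval_left] at hA hB
  rw [one_div_Gamma_eq_self_mul_one_div_Gamma_add_one (z + 2 * k), add_right_comm z]
  simp only [hyp43Coeff]
  linear_combination (2 : ℂ) ^ (4 * k) * (ascPochhammer ℂ k).eval p
    * (ascPochhammer ℂ k).eval q / ((2 * k).factorial : ℂ) * (Gamma (z + 1 + 2 * k))⁻¹
    * ((z - 2 * a) * (ascPochhammer ℂ k).eval a * hB
      - (z - 2 * b) * (ascPochhammer ℂ k).eval b * hA)

lemma hyp43_contiguous_two_zero {a b z : ℂ} (hz : a + b + p + q = z) :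
    2 * (a - b) * ((p - q) ^ 2 - (a + b - 1) ^ 2) * hyp43 p q a b z 1
      - (1 - 2 * b) * (z - 2 * b) * hyp43 p q a (b - 1) (z - 1) 1
      - (2 * a - 1) * (z - 2 * a) * hyp43 p q (a - 1) b (z - 1) 1
      = -8 * (a - b) * p * q * (Gamma z)⁻¹ := by
  simp only [hyp43, sum_range_one, hyp43Coeff_zero, Nat.cast_zero, mul_zero, add_zero, one_mul,
    inv_Gamma_sub_one]
  subst hz
  ring

lemma hyp43_contiguous_two_step {a b z : ℂ} (hz : a + b + p + q = z) (k : ℕ) :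
    -8 * (a - b) * (p + k) * (q + k) * hyp43Coeff p q a b k * (Gamma (z + 2 * k))⁻¹
      + 2 * (a - b) * ((p - q) ^ 2 - (a + b - 1) ^ 2) * hyp43Coeff p q a b (k + 1)
          * (Gamma (z + 2 * (k + 1)))⁻¹
      - (1 - 2 * b) * (z - 2 * b) * hyp43Coeff p q a (b - 1) (k + 1)
          * (Gamma (z - 1 + 2 * (k + 1)))⁻¹
      - (2 * a - 1) * (z - 2 * a) * hyp43Coeff p q (a - 1) b (k + 1)
          * (Gamma (z - 1 + 2 * (k + 1)))⁻¹
      = -8 * (a - b) * (p + (k + 1)) * (q + (k + 1)) * hyp43Coeff p q a b (k + 1)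
          * (Gamma (z + 2 * (k + 1)))⁻¹ := by
  have hfac : (((2 * (k + 1)).factorial : ℕ) : ℂ)
      = ((2 * k).factorial : ℂ) * ((2 * k + 1) * (2 * k + 2)) := by
    rw [show 2 * (k + 1) = 2 * k + 1 + 1 by ring, Nat.factorial_succ, Nat.factorial_succ]
    push_cast
    ring
  have hG₁ : (Gamma (z - 1 + 2 * (k + 1)))⁻¹
      = (z + 2 * k + 1) * (Gamma (z + 2 * (k + 1)))⁻¹ := by
    rw [show z - 1 + 2 * (k + 1) = z + 2 * (k + 1) - 1 by ring, inv_Gamma_sub_one]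
    ring
  have hG₂ : (Gamma (z + 2 * k))⁻¹
      = (z + 2 * k) * (z + 2 * k + 1) * (Gamma (z + 2 * (k + 1)))⁻¹ := by
    rw [one_div_Gamma_eq_self_mul_one_div_Gamma_add_one,
      one_div_Gamma_eq_self_mul_one_div_Gamma_add_one (z + 2 * k + 1)]
    ring_nf
  have hk : (k * 2 + 1 : ℂ) ≠ 0 := by exact_mod_cast (k * 2).succ_ne_zero
  have hsucc (x : ℂ) := ascPochhammer_succ_eval k x
  have hsucc_left (x : ℂ) :
      (ascPochhammer ℂ (k + 1)).eval (x - 1) = (x - 1) * (ascPochhammer ℂ k).eval x := by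
    rw [ascPochhammer_succ_eval_left, sub_add_cancel]
  have hpow : (2 : ℂ) ^ (4 * (k + 1)) = 2 ^ (4 * k) * 16 := by
    rw [mul_add, pow_add]; norm_num
  simp only [hyp43Coeff]
  rw [hsucc_left, hsucc_left, hsucc a, hsucc b, hsucc p, hsucc q, hfac, hG₁, hG₂, hpow]
  rw [← hz]
  field_simp
  ring

theorem hyp43_contiguous_two {a b z : ℂ} (hz : a + b + p + q = z) (N : ℕ) :
    2 * (a - b) * ((p - q) ^ 2 - (a + b - 1) ^ 2) * hyp43 p q a b z (N + 1)
      - (1 - 2 * b) * (z - 2 * b) * hyp43 p q a (b - 1) (z - 1) (N + 1)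
      - (2 * a - 1) * (z - 2 * a) * hyp43 p q (a - 1) b (z - 1) (N + 1)
      = -8 * (a - b) * (p + N) * (q + N) * hyp43Coeff p q a b N * (Gamma (z + 2 * N))⁻¹ := by
  induction N with
  | zero => simpa [hyp43Coeff_zero] using hyp43_contiguous_two_zero p q hz
  | succ N ih =>
    rw [hyp43_succ p q a b z (N + 1), hyp43_succ p q a (b - 1) (z - 1) (N + 1),
      hyp43_succ p q (a - 1) b (z - 1) (N + 1)]
    push_cast
    linear_combination ih + hyp43_contiguous_two_step p q hz N

theorem hyp43_contiguous_two_neg_natCast {a z : ℂ} (K : ℕ) (hz : a - K + p + q = z) :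
    2 * (a + K) * ((p - q) ^ 2 - (a - K - 1) ^ 2) * hyp43 p q a (-K) z (K + 2)
      = (1 + 2 * K) * (z + 2 * K) * hyp43 p q a (-K - 1) (z - 1) (K + 2)
        + (2 * a - 1) * (z - 2 * a) * hyp43 p q (a - 1) (-K) (z - 1) (K + 2) := by
  have h := hyp43_contiguous_two p q (a := a) (b := -K) (z := z) (by rw [← hz]; ring) (K + 1)
  rw [hyp43Coeff_neg_natCast p q K.lt_succ_self] at h
  linear_combination h

end hyp43

section t1

variable (n : ℕ) (r r' : ℂ)

lemma t1_eq_hyp43 {α' K N : ℕ} (hN : K < N) {a b z : ℂ}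
    (ha : α' + K + rho' n = a) (hb : -(K : ℂ) = b) (hz : r + rho n + α' = z) :
    t1 n r r' (α' + 2 * K) α'
      = (ascPochhammer ℂ α').eval (r' + rho' n)
        * hyp43 ((2 * r + 2 * r' + 1) / 4) ((2 * r - 2 * r' + 1) / 4) a b z N := by
  subst ha hb hz
  have hpar : ¬(α' + 2 * K < α' ∨ Odd (α' + 2 * K + α')) := by
    rw [Nat.odd_iff]
    omega
  have hA : (((α' + 2 * K : ℕ) : ℂ) + α' + n - 2) / 2 = α' + K + rho' n := by
    simp only [rho']
    push_cast
    ring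
  have hB : -((((α' + 2 * K : ℕ) : ℂ) - α') / 2) = -K := by
    push_cast
    ring
  rw [hyp43_neg_natCast_of_lt _ _ hN, t1, if_neg hpar, show (α' + 2 * K - α') / 2 = K by omega,
    hA, hB]
  rfl

lemma t1_relation_one (α' K : ℕ) :
    (2 * ((α' + 2 * K : ℕ) : ℂ) + n - 2) * (2 * r' + 2 * α' + n - 2)
        * t1 n r r' (α' + 2 * K) α'
      = (((α' + 2 * K : ℕ) : ℂ) + α' + n - 2)
          * (2 * r + 2 * ((α' + 2 * K : ℕ) : ℂ) + n - 1)
          * t1 n r r' (α' + 2 * K + 1) (α' + 1)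
        + (((α' + 2 * K : ℕ) : ℂ) - α') * (2 * r - 2 * ((α' + 2 * K : ℕ) : ℂ) - n + 3)
          * t1 n r r' (α' + 2 * K - 1) (α' + 1) := by
  set p := (2 * r + 2 * r' + 1) / 4
  set q := (2 * r - 2 * r' + 1) / 4
  set P := (ascPochhammer ℂ α').eval (r' + rho' n)
  set a : ℂ := α' + K + rho' n
  set z : ℂ := r + rho n + α'
  have h₀ : t1 n r r' (α' + 2 * K) α' = P * hyp43 p q a (-K) z (K + 1) :=
    t1_eq_hyp43 n r r' K.lt_succ_self rfl rfl rfl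
  have h₁ : t1 n r r' (α' + 2 * K + 1) (α' + 1)
      = P * (r' + rho' n + α') * hyp43 p q (a + 1) (-K) (z + 1) (K + 1) := by
    rw [show α' + 2 * K + 1 = α' + 1 + 2 * K by ring,
      t1_eq_hyp43 n r r' K.lt_succ_self (a := a + 1) (z := z + 1) (by push_cast; ring) rfl
        (by push_cast; ring),
      ascPochhammer_succ_eval]
  have h₂ : (((α' + 2 * K : ℕ) : ℂ) - α') * t1 n r r' (α' + 2 * K - 1) (α' + 1)
      = 2 * K * (P * (r' + rho' n + α')) * hyp43 p q a (-K + 1) (z + 1) (K + 1) := by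
    rcases K with _ | K
    · simp
    · rw [show α' + 2 * (K + 1) - 1 = α' + 1 + 2 * K by omega,
        t1_eq_hyp43 n r r' (N := K + 1 + 1) K.succ.lt_succ_self.le (a := a)
          (b := -(K + 1 : ℕ) + 1) (z := z + 1) (by simp only [a]; push_cast; ring)
          (by push_cast; ring) (by push_cast; ring),
        ascPochhammer_succ_eval]
      push_cast
      ring
  have hc := hyp43_contiguous_one p q a (-K) z (K + 1)
  rw [h₀, h₁]
  simp only [a, z, rho, rho'] at hc h₂ ⊢
  push_cast at hc h₂ ⊢
  linear_combination 4 * P * (r' + (n - 2) / 2 + α') * hc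
    - (2 * r - 2 * (α' + 2 * K) - n + 3) * h₂

lemma t1_relation_two (α' K : ℕ) (hα' : 1 ≤ α') :
    (2 * ((α' + 2 * K : ℕ) : ℂ) + n - 2) * (2 * r' - 2 * α' - n + 4)
        * t1 n r r' (α' + 2 * K) α'
      = (((α' + 2 * K : ℕ) : ℂ) - α' + 1) * (2 * r + 2 * ((α' + 2 * K : ℕ) : ℂ) + n - 1)
          * t1 n r r' (α' + 2 * K + 1) (α' - 1)
        + (((α' + 2 * K : ℕ) : ℂ) + α' + n - 3)
          * (2 * r - 2 * ((α' + 2 * K : ℕ) : ℂ) - n + 3)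
          * t1 n r r' (α' + 2 * K - 1) (α' - 1) := by
  obtain ⟨β, rfl⟩ : ∃ β, α' = β + 1 := ⟨α' - 1, by omega⟩
  set p := (2 * r + 2 * r' + 1) / 4
  set q := (2 * r - 2 * r' + 1) / 4
  set P := (ascPochhammer ℂ β).eval (r' + rho' n)
  set a : ℂ := β + 1 + K + rho' n
  set z : ℂ := r + rho n + β + 1
  have h₀ : t1 n r r' (β + 1 + 2 * K) (β + 1)
      = P * (r' + rho' n + β) * hyp43 p q a (-K) z (K + 2) := by
    rw [t1_eq_hyp43 n r r' (N := K + 2) (by omega) (a := a) (z := z) (by push_cast; ring) rfl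
      (by push_cast; ring), ascPochhammer_succ_eval]
  have h₁ : t1 n r r' (β + 1 + 2 * K + 1) (β + 1 - 1)
      = P * hyp43 p q a (-K - 1) (z - 1) (K + 2) := by
    rw [show β + 1 + 2 * K + 1 = β + 2 * (K + 1) by ring, Nat.add_sub_cancel,
      t1_eq_hyp43 n r r' (N := K + 2) (by omega) (a := a) (b := -K - 1) (z := z - 1)
        (by push_cast; ring) (by push_cast; ring) (by ring)]
  have h₂ : t1 n r r' (β + 1 + 2 * K - 1) (β + 1 - 1)
      = P * hyp43 p q (a - 1) (-K) (z - 1) (K + 2) := by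
    rw [show β + 1 + 2 * K - 1 = β + 2 * K by omega, Nat.add_sub_cancel,
      t1_eq_hyp43 n r r' (N := K + 2) (by omega) (a := a - 1) (z := z - 1) (by ring) rfl (by ring)]
  have hc := hyp43_contiguous_two_neg_natCast p q K (a := a) (z := z)
    (by simp only [p, q, a, z, rho, rho']; ring)
  rw [h₀, h₁, h₂]
  simp only [a, z, p, q, rho, rho'] at hc ⊢
  push_cast at hc ⊢
  linear_combination 2 * P * hc

end t1

theorem statement7 (n : ℕ) (r r' : ℂ) :
    IsAdmissible n r r' (t1 n r r') ∧ t1 n r r' 0 0 = (Complex.Gamma (r + rho n))⁻¹ := by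
  refine ⟨⟨fun α α' h => if_pos h, fun α α' hle heven => ?_⟩, ?_⟩
  · obtain ⟨m, hm⟩ := heven
    obtain ⟨K, rfl⟩ : ∃ K, α = α' + 2 * K := ⟨(α - α') / 2, by omega⟩
    exact ⟨t1_relation_one n r r' α' K, t1_relation_two n r r' α' K⟩
  · simp [t1]

end
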